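/- Monge-type monotonicity of leftmost optimal crossing points: for all lists A1, A2, B over a type with decidable equality and all indices j1 ≤ j2 ≤ B.length, the leftmost optimal crossing points satisfy θ(j1) ≤ θ(j2). That is, for a fixed source, the leftmost point of the common boundary through which some shortest path to the sink passes moves monotonically to the right as the sink moves to the right. -/

import Mathlib

/-- Costs of the edit operations (formerly Mathlib's `Levenshtein.Cost`). -/
structure Levenshtein.Cost (α β δ : Type*) where
  delete : α → δ
  insert : β → δ
  substitute : α → β → δ

/-- Unit costs (formerly Mathlib's `Levenshtein.defaultCost`). -/
def Levenshtein.defaultCost {α : Type*} [DecidableEq α] : Levenshtein.Cost α α ℕ where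
  delete _ := 1
  insert _ := 1
  substitute a b := if a = b then 0 else 1

/-- Levenshtein distance (formerly in Mathlib), given by its defining recurrence. -/
def levenshtein {α β δ : Type*} [AddZeroClass δ] [Min δ] (C : Levenshtein.Cost α β δ) :
    List α → List β → δ
  | [], [] => 0
  | [], y :: ys => C.insert y + levenshtein C [] ys
  | x :: xs, [] => C.delete x + levenshtein C xs []
  | x :: xs, y :: ys =>
    min (C.delete x + levenshtein C xs (y :: ys))
      (min (C.insert y + levenshtein C (x :: xs) ys) (C.substitute x y + levenshtein C xs ys))

/-- The unit-cost Levenshtein edit distance. -/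
def editDist {α : Type*} [DecidableEq α] (A B : List α) : ℕ :=
  levenshtein Levenshtein.defaultCost A B

/-- `cost_j(y) = d(A₁, B.take y) + d(A₂, (B.take j).drop y)`: the length of a shortest
source-to-`u_j` path through the boundary point `w_y`. -/
def splitCost {α : Type*} [DecidableEq α] (A₁ A₂ B : List α) (j y : ℕ) : ℕ :=
  editDist A₁ (B.take y) + editDist A₂ ((B.take j).drop y)

/-! The edit distance to a concatenation splits: `d(A, P ++ Q) = d(U, P) + d(V, Q)` for some
`A = U ++ V`, and `d` is subadditive under concatenation on both sides. From these two facts, by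
induction on the total length, `d(A, ·)` satisfies the quadrangle inequality
`d(A, P ++ Q) + d(A, Q ++ R) ≤ d(A, P ++ Q ++ R) + d(A, Q)`, so `cost_j(y)` is a Monge array in
`(j, y)`. If `θ(j₂) < θ(j₁)`, the Monge inequality at these two points makes `θ(j₂)` optimal for `j₁`
as well, contradicting the leastness of `θ(j₁)`. -/

theorem List.drop_eq_drop_take_append_drop {α : Type*} (M : List α) {y y' : ℕ} (hy : y ≤ y') :
    M.drop y = (M.take y').drop y ++ M.drop y' := by
  conv_lhs => rw [← List.take_append_drop y' M]
  rw [List.drop_append]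
  rcases le_total y' M.length with h | h <;> simp [h] <;> omega

section EditDist

variable {α : Type*} [DecidableEq α]

theorem editDist_nil_cons (b : α) (Y : List α) : editDist [] (b :: Y) = editDist [] Y + 1 := by
  rw [editDist, levenshtein]; exact Nat.add_comm _ _

theorem editDist_cons_nil (a : α) (X : List α) : editDist (a :: X) [] = editDist X [] + 1 := by
  rw [editDist, levenshtein]; exact Nat.add_comm _ _

theorem editDist_cons_cons (a b : α) (X Y : List α) :
    editDist (a :: X) (b :: Y) =
      min (editDist X (b :: Y) + 1)
        (min (editDist (a :: X) Y + 1) (editDist X Y + if a = b then 0 else 1)) := by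
  rw [editDist, levenshtein]
  simp only [Levenshtein.defaultCost, editDist, Nat.add_comm]

@[simp]
theorem editDist_nil_left (Y : List α) : editDist [] Y = Y.length := by
  induction Y with
  | nil => rw [editDist, levenshtein]; rfl
  | cons b Y ih => rw [editDist_nil_cons, ih, List.length_cons]

@[simp]
theorem editDist_nil_right (X : List α) : editDist X [] = X.length := by
  induction X with
  | nil => rw [editDist, levenshtein]; rfl
  | cons a X ih => rw [editDist_cons_nil, ih, List.length_cons]

theorem editDist_cons_left_le (a : α) (X Y : List α) :
    editDist (a :: X) Y ≤ editDist X Y + 1 := by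
  cases Y with
  | nil => simp
  | cons b Y => rw [editDist_cons_cons]; exact min_le_left _ _

theorem editDist_cons_right_le (b : α) (X Y : List α) :
    editDist X (b :: Y) ≤ editDist X Y + 1 := by
  cases X with
  | nil => simp
  | cons a X => rw [editDist_cons_cons]; exact (min_le_right _ _).trans (min_le_left _ _)

theorem editDist_cons_cons_le (a b : α) (X Y : List α) :
    editDist (a :: X) (b :: Y) ≤ editDist X Y + if a = b then 0 else 1 := by
  rw [editDist_cons_cons]; exact (min_le_right _ _).trans (min_le_right _ _)

theorem editDist_comm (X Y : List α) : editDist X Y = editDist Y X := by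
  induction X generalizing Y with
  | nil => simp
  | cons a X ih =>
    induction Y with
    | nil => simp
    | cons b Y ihY =>
      rw [editDist_cons_cons, editDist_cons_cons, ih, ih, ihY, min_left_comm]
      simp only [eq_comm]

theorem editDist_append_left_le (U X Y : List α) :
    editDist (U ++ X) Y ≤ editDist X Y + U.length := by
  induction U with
  | nil => simp
  | cons a U ih =>
    grw [List.cons_append, editDist_cons_left_le, ih, List.length_cons, Nat.add_assoc]

theorem editDist_append_right_le (X P Y : List α) :
    editDist X (P ++ Y) ≤ editDist X Y + P.length := by
  rw [editDist_comm, editDist_comm X]; exact editDist_append_left_le P Y X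

theorem editDist_append_append_le :
    ∀ U V P Q : List α, editDist (U ++ V) (P ++ Q) ≤ editDist U P + editDist V Q
  | [], V, P, Q => by simpa [Nat.add_comm] using editDist_append_right_le V P Q
  | U, V, [], Q => by simpa [Nat.add_comm] using editDist_append_left_le U V Q
  | a :: U, V, b :: P, Q => by
    have hdel := (editDist_cons_left_le a _ _).trans
      (Nat.add_le_add_right (editDist_append_append_le U V (b :: P) Q) 1)
    have hins := (editDist_cons_right_le b _ _).trans
      (Nat.add_le_add_right (editDist_append_append_le (a :: U) V P Q) 1)
    have hsub := (editDist_cons_cons_le a b _ _).trans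
      (Nat.add_le_add_right (editDist_append_append_le U V P Q) _)
    simp only [List.cons_append] at hdel hins hsub ⊢
    rw [editDist_cons_cons a b U P]
    omega
termination_by U _ P => U.length + P.length

theorem editDist_exists_split_le :
    ∀ A P Q : List α, ∃ U V, A = U ++ V ∧ editDist U P + editDist V Q ≤ editDist A (P ++ Q)
  | A, [], Q => ⟨[], A, rfl, by simp⟩
  | [], b :: P, Q => ⟨[], [], rfl, by simp; omega⟩
  | a :: A, b :: P, Q => by
    rw [List.cons_append, editDist_cons_cons]
    let p t := ∃ U V, a :: A = U ++ V ∧ editDist U (b :: P) + editDist V Q ≤ t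
    refine min_rec' p ?_ (min_rec' p ?_ ?_)
    · obtain ⟨U, V, rfl, h⟩ := editDist_exists_split_le A (b :: P) Q
      rw [List.cons_append] at h
      exact ⟨a :: U, V, rfl, by grw [editDist_cons_left_le, ← h]; omega⟩
    · obtain ⟨U, V, hA, h⟩ := editDist_exists_split_le (a :: A) P Q
      exact ⟨U, V, hA, by grw [editDist_cons_right_le, ← h]; omega⟩
    · obtain ⟨U, V, rfl, h⟩ := editDist_exists_split_le A P Q
      exact ⟨a :: U, V, rfl, by grw [editDist_cons_cons_le, ← h]; omega⟩
termination_by A P => A.length + P.length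

theorem editDist_exists_split (A P Q : List α) :
    ∃ U V, A = U ++ V ∧ editDist A (P ++ Q) = editDist U P + editDist V Q := by
  obtain ⟨U, V, rfl, h⟩ := editDist_exists_split_le A P Q
  exact ⟨U, V, rfl, (editDist_append_append_le U V P Q).antisymm h⟩

/-- Split `A = U ++ V ++ Z` optimally against `P ++ Q ++ R`. Recombining the pieces bounds the left
side by `d(U, P) + d(Z, R) + d(V ++ Z, Q) + d(U ++ V, Q)`, and the same inequality for the shorter
instance `(Q; U, V, Z)`, with the roles of the two strings swapped, finishes. -/
theorem editDist_append_add_editDist_append_le :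
    ∀ A P Q R : List α,
      editDist A (P ++ Q) + editDist A (Q ++ R) ≤ editDist A (P ++ Q ++ R) + editDist A Q
  | A, [], Q, R => by simp [Nat.add_comm]
  | A, b :: P, Q, R => by
    obtain ⟨U, W, hA, hUW⟩ := editDist_exists_split A (b :: P) (Q ++ R)
    obtain ⟨V, Z, hW, hVZ⟩ := editDist_exists_split W Q R
    subst hW
    have hPQ := editDist_append_append_le U (V ++ Z) (b :: P) Q
    have hQR := editDist_append_append_le (U ++ V) Z Q R
    have hswap := editDist_append_add_editDist_append_le Q U V Z
    rw [List.append_assoc] at hQR hswap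
    rw [List.append_assoc (b :: P)]
    simp only [editDist_comm Q] at hswap
    subst hA
    omega
termination_by A P Q R => A.length + P.length + Q.length + R.length
decreasing_by simp only [hA, List.length_append, List.length_cons]; omega

end EditDist

theorem splitCost_add_splitCost_le {α : Type*} [DecidableEq α] (A₁ A₂ B : List α)
    {y y' j₁ j₂ : ℕ} (hy : y ≤ y') (hy' : y' ≤ j₁) (hj : j₁ ≤ j₂) :
    splitCost A₁ A₂ B j₁ y + splitCost A₁ A₂ B j₂ y' ≤
      splitCost A₁ A₂ B j₁ y' + splitCost A₁ A₂ B j₂ y := by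
  have hPQ : (B.take j₁).drop y = (B.take y').drop y ++ (B.take j₁).drop y' := by
    rw [(B.take j₁).drop_eq_drop_take_append_drop hy, List.take_take, min_eq_left hy']
  have hQR : (B.take j₂).drop y' = (B.take j₁).drop y' ++ (B.take j₂).drop j₁ := by
    rw [(B.take j₂).drop_eq_drop_take_append_drop hy', List.take_take, min_eq_left hj]
  have hPQR : (B.take j₂).drop y = (B.take j₁).drop y ++ (B.take j₂).drop j₁ := by
    rw [(B.take j₂).drop_eq_drop_take_append_drop (hy.trans hy'), List.take_take, min_eq_left hj]
  have := editDist_append_add_editDist_append_le A₂ ((B.take y').drop y) ((B.take j₁).drop y')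
    ((B.take j₂).drop j₁)
  simp only [splitCost, hPQR, hPQ, hQR] at this ⊢
  omega

theorem leftmost_crossing_monotone_general {α : Type*} [DecidableEq α] (A₁ A₂ B : List α)
    (j₁ j₂ : ℕ) (hj : j₁ ≤ j₂) (θ₁ θ₂ : ℕ)
    (h₁ : IsLeast {y | y ≤ j₁ ∧ ∀ z ≤ j₁, splitCost A₁ A₂ B j₁ y ≤ splitCost A₁ A₂ B j₁ z} θ₁)
    (h₂ : IsLeast {y | y ≤ j₂ ∧ ∀ z ≤ j₂, splitCost A₁ A₂ B j₂ y ≤ splitCost A₁ A₂ B j₂ z} θ₂) :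
    θ₁ ≤ θ₂ := by
  by_contra! hlt
  obtain ⟨⟨hθ₁, hmin₁⟩, hleast₁⟩ := h₁
  obtain ⟨⟨-, hmin₂⟩, -⟩ := h₂
  have hmonge := splitCost_add_splitCost_le A₁ A₂ B hlt.le hθ₁ hj
  have hθ₂_opt : ∀ z ≤ j₁, splitCost A₁ A₂ B j₁ θ₂ ≤ splitCost A₁ A₂ B j₁ z := fun z hz => by
    have := hmin₂ θ₁ (hθ₁.trans hj)
    have := hmin₁ z hz
    omega
  exact hlt.not_ge (hleast₁ ⟨hlt.le.trans hθ₁, hθ₂_opt⟩)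

/-- Monge-type monotonicity of leftmost optimal crossing points: if `θ j` is the least
minimizer of `cost_j` over `[0, j]`, then `θ(j₁) ≤ θ(j₂)` whenever `j₁ ≤ j₂ ≤ |B|`. -/
theorem leftmost_crossing_monotone {α : Type*} [DecidableEq α] (A₁ A₂ B : List α)
    (j₁ j₂ : ℕ) (hj : j₁ ≤ j₂) (hj₂ : j₂ ≤ B.length) (θ₁ θ₂ : ℕ)
    (h₁ : IsLeast {y | y ≤ j₁ ∧ ∀ z ≤ j₁, splitCost A₁ A₂ B j₁ y ≤ splitCost A₁ A₂ B j₁ z} θ₁)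
    (h₂ : IsLeast {y | y ≤ j₂ ∧ ∀ z ≤ j₂, splitCost A₁ A₂ B j₂ y ≤ splitCost A₁ A₂ B j₂ z} θ₂) :
    θ₁ ≤ θ₂ :=
  leftmost_crossing_monotone_general A₁ A₂ B j₁ j₂ hj θ₁ θ₂ h₁ h₂
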